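/- Let U and V be independent Bernoulli random variables with means p and q respectively, and let X, Y be real-valued random variables such that X is conditionally independent of V given U, and Y is conditionally independent of U given V. Then Cov(UX, VY) = p·q·Cov(X, Y | U = 1, V = 1). -/

import Mathlib

open MeasureTheory ProbabilityTheory

/-!
Since `U` and `V` take values in `{0, 1}`, the products `UX · VY`, `UX · V` and `U · VY` are the
restrictions of `XY`, `X` and `Y` to `{U = 1, V = 1}`, an event of probability `pq`; so the
conditional moments of `X`, `Y` and `XY` are `(pq)⁻¹` times `E[UX · V]`, `E[U · VY]` and
`E[UX · VY]`. Conditional independence of `X` and `V` given `U`, together with independence of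
`U` and `V`, makes `V` independent of `(U, X)`, whence `E[UX · V] = q E[UX]`; symmetrically
`E[U · VY] = p E[VY]`, and the identity is algebra.
-/

/-- Covariance of two real random variables with respect to a measure. -/
noncomputable def covm {Ω : Type*} [MeasurableSpace Ω] (μ : Measure Ω) (X Y : Ω → ℝ) : ℝ :=
  (∫ ω, X ω * Y ω ∂μ) - (∫ ω, X ω ∂μ) * (∫ ω, Y ω ∂μ)

section CondIndep

variable {Ω β γ δ : Type*} {mΩ : MeasurableSpace Ω}
  {mβ : MeasurableSpace β} {mγ : MeasurableSpace γ} {mδ : MeasurableSpace δ}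
  {μ : Measure Ω} [IsFiniteMeasure μ] {f : Ω → β} {g : Ω → γ} {h : Ω → δ}

lemma setIntegral_condExp_indicator_one {m : MeasurableSpace Ω} (hm : m ≤ mΩ)
    {s t : Set Ω} (hs : MeasurableSet[m] s) (ht : MeasurableSet[mΩ] t) :
    ∫ ω in s, (μ⟦t | m⟧) ω ∂μ = μ.real (s ∩ t) := by
  rw [setIntegral_condExp hm ((integrable_const (1 : ℝ)).indicator ht) hs, ← Pi.one_def,
    integral_indicator_one ht, measureReal_restrict_apply ht, Set.inter_comm]

variable [StandardBorelSpace Ω]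

lemma measureReal_inter_preimage_eq_mul_of_condIndepFun (hf : Measurable f) (hg : Measurable g)
    (hh : Measurable h) (hfg : CondIndepFun (mδ.comap h) hh.comap_le f g μ)
    (hhg : IndepFun h g μ) {s : Set δ} {t : Set β} {u : Set γ} (hs : MeasurableSet s)
    (ht : MeasurableSet t) (hu : MeasurableSet u) :
    μ.real (h ⁻¹' s ∩ f ⁻¹' t ∩ g ⁻¹' u) = μ.real (h ⁻¹' s ∩ f ⁻¹' t) * μ.real (g ⁻¹' u) := by
  have hs' : MeasurableSet[mδ.comap h] (h ⁻¹' s) := ⟨s, hs, rfl⟩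
  have hprod := (condIndepFun_iff_condExp_inter_preimage_eq_mul hf hg).mp hfg t u ht hu
  have hcond_g : μ⟦g ⁻¹' u | mδ.comap h⟧ =ᵐ[μ] fun _ ↦ μ.real (g ⁻¹' u) := by
    refine (condExp_indep_eq hg.comap_le hh.comap_le
      (stronglyMeasurable_const.indicator ⟨u, hu, rfl⟩)
      ((IndepFun_iff_Indep _ _ _).mp hhg.symm)).trans ?_
    simp_rw [← integral_indicator_one (μ := μ) (hg hu)]
    rfl
  calc μ.real (h ⁻¹' s ∩ f ⁻¹' t ∩ g ⁻¹' u)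
      = ∫ ω in h ⁻¹' s, (μ⟦f ⁻¹' t ∩ g ⁻¹' u | mδ.comap h⟧) ω ∂μ := by
        rw [Set.inter_assoc,
          setIntegral_condExp_indicator_one hh.comap_le hs' ((hf ht).inter (hg hu))]
    _ = ∫ ω in h ⁻¹' s, (μ⟦f ⁻¹' t | mδ.comap h⟧) ω * μ.real (g ⁻¹' u) ∂μ := by
        refine setIntegral_congr_ae (hh hs) ?_
        filter_upwards [hprod, hcond_g] with ω hω hω' _
        rw [hω, hω']
    _ = μ.real (h ⁻¹' s ∩ f ⁻¹' t) * μ.real (g ⁻¹' u) := by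
        rw [integral_mul_const, setIntegral_condExp_indicator_one hh.comap_le hs' (hf ht)]

lemma indepFun_prodMk_of_condIndepFun (hf : Measurable f) (hg : Measurable g)
    (hh : Measurable h) (hfg : CondIndepFun (mδ.comap h) hh.comap_le f g μ)
    (hhg : IndepFun h g μ) : IndepFun (fun ω ↦ (h ω, f ω)) g μ := by
  rw [indepFun_iff_map_prod_eq_prod_map_map (by fun_prop) hg.aemeasurable,
    Measure.ext_prod₃_iff']
  intro s t u hs ht hu
  rw [Measure.map_apply (by fun_prop) ((hs.prod ht).prod hu), Measure.prod_prod,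
    Measure.map_apply (by fun_prop) (hs.prod ht), Measure.map_apply hg hu]
  simp only [Set.mk_preimage_prod]
  rw [← ENNReal.toReal_eq_toReal_iff' (measure_ne_top _ _)
    (ENNReal.mul_ne_top (measure_ne_top _ _) (measure_ne_top _ _)), ENNReal.toReal_mul]
  exact measureReal_inter_preimage_eq_mul_of_condIndepFun hf hg hh hfg hhg hs ht hu

end CondIndep

section ZeroOne

variable {Ω : Type*} {mΩ : MeasurableSpace Ω} {μ : Measure Ω} {U : Ω → ℝ}

lemma mul_eq_indicator_of_zero_or_one (hU01 : ∀ ω, U ω = 0 ∨ U ω = 1) (f : Ω → ℝ) (ω : Ω) :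
    U ω * f ω = {ω | U ω = 1}.indicator f ω := by
  rcases hU01 ω with h | h <;> simp [h]

lemma integral_eq_measureReal_of_zero_or_one (hU01 : ∀ ω, U ω = 0 ∨ U ω = 1)
    (hU : Measurable U) : ∫ ω, U ω ∂μ = μ.real {ω | U ω = 1} := by
  rw [← integral_indicator_one (s := {ω | U ω = 1}) (hU (measurableSet_singleton 1))]
  congr with ω
  simpa using mul_eq_indicator_of_zero_or_one hU01 1 ω

lemma integral_cond_eq_inv_mul_integral_indicator {s : Set Ω} (hs : MeasurableSet s) (f : Ω → ℝ) :
    ∫ ω, f ω ∂μ[|s] = (μ.real s)⁻¹ * ∫ ω, s.indicator f ω ∂μ := by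
  rw [ProbabilityTheory.cond, integral_smul_measure, integral_indicator hs, ENNReal.toReal_inv,
    smul_eq_mul, measureReal_def]

variable {V : Ω → ℝ}

lemma integral_mul_cond_inter_eq (hU01 : ∀ ω, U ω = 0 ∨ U ω = 1)
    (hV01 : ∀ ω, V ω = 0 ∨ V ω = 1) (hU : Measurable U) (hV : Measurable V) (f g : Ω → ℝ) :
    ∫ ω, f ω * g ω ∂μ[|{ω | U ω = 1} ∩ {ω | V ω = 1}]
      = (μ.real ({ω | U ω = 1} ∩ {ω | V ω = 1}))⁻¹ * ∫ ω, U ω * f ω * (V ω * g ω) ∂μ := by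
  have hA : MeasurableSet {ω | U ω = 1} := hU (measurableSet_singleton 1)
  have hB : MeasurableSet {ω | V ω = 1} := hV (measurableSet_singleton 1)
  simp_rw [integral_cond_eq_inv_mul_integral_indicator (hA.inter hB),
    Set.inter_indicator_mul, mul_eq_indicator_of_zero_or_one hU01,
    mul_eq_indicator_of_zero_or_one hV01]

lemma integral_mul_mul_eq_of_condIndepFun [StandardBorelSpace Ω] [IsFiniteMeasure μ]
    {X : Ω → ℝ} (hV01 : ∀ ω, V ω = 0 ∨ V ω = 1) (hU : Measurable U) (hV : Measurable V)
    (hX : Measurable X)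
    (hXV : CondIndepFun (MeasurableSpace.comap U inferInstance) hU.comap_le X V μ)
    (hUV : IndepFun U V μ) :
    ∫ ω, U ω * X ω * V ω ∂μ = (∫ ω, U ω * X ω ∂μ) * μ.real {ω | V ω = 1} := by
  have hUX_V : IndepFun (fun ω ↦ U ω * X ω) V μ :=
    (indepFun_prodMk_of_condIndepFun hX hV hU hXV hUV).comp
      (measurable_fst.mul measurable_snd) measurable_id
  rw [hUX_V.integral_fun_mul_eq_mul_integral (by fun_prop) hV.aestronglyMeasurable,
    integral_eq_measureReal_of_zero_or_one hV01 hV]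

end ZeroOne

theorem stmt0_general {Ω : Type*} [mΩ : MeasurableSpace Ω] [StandardBorelSpace Ω]
    (μ : Measure Ω) [IsProbabilityMeasure μ]
    (U V X Y : Ω → ℝ) (p q : ℝ) (hp : 0 < p) (hq : 0 < q)
    (hUval : ∀ ω, U ω = 0 ∨ U ω = 1) (hVval : ∀ ω, V ω = 0 ∨ V ω = 1)
    (hU : Measurable U) (hV : Measurable V) (hX : Measurable X) (hY : Measurable Y)
    (hUV : IndepFun U V μ)
    (hpU : (μ {ω | U ω = 1}).toReal = p) (hqV : (μ {ω | V ω = 1}).toReal = q)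
    (hXV : CondIndepFun (MeasurableSpace.comap U inferInstance) hU.comap_le X V μ)
    (hYU : CondIndepFun (MeasurableSpace.comap V inferInstance) hV.comap_le Y U μ) :
    covm μ (fun ω => U ω * X ω) (fun ω => V ω * Y ω)
      = p * q * covm (μ[|{ω | U ω = 1} ∩ {ω | V ω = 1}]) X Y := by
  have hAB : μ.real ({ω | U ω = 1} ∩ {ω | V ω = 1}) = p * q := by
    rw [measureReal_def, ← hpU, ← hqV, ← ENNReal.toReal_mul]
    exact congrArg ENNReal.toReal (hUV.measure_inter_preimage_eq_mul _ _
      (measurableSet_singleton 1) (measurableSet_singleton 1))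
  have hcond := integral_mul_cond_inter_eq (μ := μ) hUval hVval hU hV
  have hX_cond := hcond X 1
  have hY_cond := hcond 1 Y
  simp only [Pi.one_apply, mul_one, one_mul, hAB] at hcond hX_cond hY_cond
  rw [integral_mul_mul_eq_of_condIndepFun hVval hU hV hX hXV hUV, measureReal_def, hqV]
    at hX_cond
  simp only [mul_comm (U _) (V _ * Y _)] at hY_cond
  rw [integral_mul_mul_eq_of_condIndepFun hUval hV hU hY hYU hUV.symm, measureReal_def, hpU]
    at hY_cond
  rw [covm, covm, hcond, hX_cond, hY_cond]
  field_simp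

/-- For independent Bernoulli `U, V` with means `p, q > 0`, and `X ⟂ V | U`,
`Y ⟂ U | V`, we have `Cov(UX, VY) = p q · Cov(X, Y | U = 1, V = 1)`. -/
theorem stmt0 {Ω : Type*} [mΩ : MeasurableSpace Ω] [StandardBorelSpace Ω]
    (μ : Measure Ω) [IsProbabilityMeasure μ]
    (U V X Y : Ω → ℝ) (p q : ℝ) (hp : 0 < p) (hq : 0 < q)
    (hUval : ∀ ω, U ω = 0 ∨ U ω = 1) (hVval : ∀ ω, V ω = 0 ∨ V ω = 1)
    (hU : Measurable U) (hV : Measurable V) (hX : Measurable X) (hY : Measurable Y)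
    (hUV : IndepFun U V μ)
    (hpU : (μ {ω | U ω = 1}).toReal = p) (hqV : (μ {ω | V ω = 1}).toReal = q)
    (hXV : CondIndepFun (MeasurableSpace.comap U inferInstance) hU.comap_le X V μ)
    (hYU : CondIndepFun (MeasurableSpace.comap V inferInstance) hV.comap_le Y U μ)
    (hXint : Integrable X μ) (hYint : Integrable Y μ)
    (hXYint : Integrable (fun ω => X ω * Y ω) μ)
    (hprod : Integrable (fun ω => (U ω * X ω) * (V ω * Y ω)) μ)
    (hUX : Integrable (fun ω => U ω * X ω) μ) (hVY : Integrable (fun ω => V ω * Y ω) μ) :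
    covm μ (fun ω => U ω * X ω) (fun ω => V ω * Y ω)
      = p * q * covm (μ[|{ω | U ω = 1} ∩ {ω | V ω = 1}]) X Y :=
  stmt0_general (mΩ := mΩ) μ U V X Y p q hp hq hUval hVval hU hV hX hY hUV hpU hqV hXV hYU
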